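/- Wasserstein separation of perturbed Gaussian densities: Fix d ≥ 1, j ∈ ℕ*, and set m := 2^{dj}. Let ψ : ℝ^d → ℝ be a Lipschitz continuously differentiable function with support contained in (−1,1)^d, ∫ ψ = 0 and ∫ ψ² = 1, and let M ≥ Lip(ψ) with M > 0, where Lip(ψ) is the Lipschitz constant of ψ. For k ∈ {0,…,2^j−1}^d define ψ_k(x) := √m·ψ(2^j x − (2^j − 1)·𝟙 + 2k), where 𝟙 = (1,…,1) ∈ ℝ^d. Let g₀(x) := (2π)^{−d/2} exp(−‖x‖²/2) and, for ε ∈ {−1,1}^{{0,…,2^j−1}^d} and c₁ > 0, set g_ε := g₀ + c₁·Σ_k ε_k·ψ_k. If g_ε ≥ 0 and g_{ε′} ≥ 0 (so both are probability densities), then W₁(g_ε·Leb, g_{ε′}·Leb) ≥ 2·c₁·2^{−j(d/2+1)}·M^{−1}·ω(ε, ε′), where ω(ε, ε′) := #{k : ε_k ≠ ε′_k} is the Hamming distance. -/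

import Mathlib

/-!
Test the supremum defining `W₁` against `f = ∑ₖ βₖ ψₖ` with `βₖ = (εₖ - ε'ₖ) / (2L)`,
`L = √m · M · 2^j`. The `ψₖ` live on pairwise disjoint dyadic cells and each `βₖ ψₖ` is
1-Lipschitz, so `f` is 1-Lipschitz; since the `ψₖ` are orthonormal,
`∫ f (g_ε - g_ε') = c₁ ∑ₖ (εₖ - ε'ₖ)² / (2L) = 2 c₁ ω(ε, ε') / L`. The supremum is finite
because `g_ε - g_ε'` has compact support and integral zero, so it pairs with a 1-Lipschitz `φ`
as with `φ - φ 0`, which grows at most like `‖x‖`.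
-/

open MeasureTheory Real Set

noncomputable section

/-- `ℝ^d` with the Euclidean structure. -/
abbrev Euc (d : ℕ) := EuclideanSpace ℝ (Fin d)

/-- 1-Wasserstein distance between two measures on `ℝ^d`, in dual
(Kantorovich–Rubinstein) form: `W₁(P,Q) = sup_{f 1-Lipschitz} ∫ f dP - ∫ f dQ`. -/
def W1 {d : ℕ} (P Q : Measure (Euc d)) : ℝ :=
  ⨆ f : {f : Euc d → ℝ // LipschitzWith 1 f}, ((∫ x, f.1 x ∂P) - ∫ x, f.1 x ∂Q)

/-- Density of the standard Gaussian `N(0, I_d)` on `ℝ^d`. -/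
def stdGauss (d : ℕ) (x : Euc d) : ℝ :=
  (2 * π) ^ (-(d : ℝ) / 2) * Real.exp (-‖x‖ ^ 2 / 2)

/-- Rescaled and translated bump `ψ_k(x) = √m ψ(2^j x - (2^j - 1) 𝟙 + 2k)`,
with `m = 2^{dj}`. -/
def psiK (d j : ℕ) (ψ : Euc d → ℝ) (k : Fin d → Fin (2 ^ j)) (x : Euc d) : ℝ :=
  Real.sqrt ((2 : ℝ) ^ (d * j)) *
    ψ (WithLp.toLp 2 (fun i => (2 : ℝ) ^ j * x i - ((2 : ℝ) ^ j - 1) + 2 * ((k i : ℕ) : ℝ) : Fin d → ℝ))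

/-- Perturbed Gaussian density `g_ε = g₀ + c₁ Σ_k ε_k ψ_k`. -/
def gPerturbed (d j : ℕ) (ψ : Euc d → ℝ) (c₁ : ℝ)
    (ε : (Fin d → Fin (2 ^ j)) → ℝ) (x : Euc d) : ℝ :=
  stdGauss d x + c₁ * ∑ k, ε k * psiK d j ψ k x

open scoped NNReal

theorem exists_forall_ne_eq_zero_of_pairwise_disjoint_support {ι : Type*} [Nonempty ι]
    {α M : Type*} [Zero M] {h : ι → α → M}
    (hdisj : Pairwise fun i i' => Disjoint (Function.support (h i)) (Function.support (h i')))
    (x : α) :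
    ∃ i, ∀ i' ≠ i, h i' x = 0 := by
  by_cases hx : ∃ i, h i x ≠ 0
  · obtain ⟨i, hi⟩ := hx
    exact ⟨i, fun i' hi' => Function.disjoint_support_iff.1 (hdisj hi'.symm) hi⟩
  · push Not at hx
    exact ⟨Classical.arbitrary ι, fun i' _ => hx i'⟩

section DisjointSupports

variable {E : Type*} [NormedAddCommGroup E] [NormedSpace ℝ E] {K : ℝ≥0}

/- If `|f x| + |g y| > K ‖x - y‖`, the point dividing `[x, y]` in the ratio `|f x| : |g y|`
would lie in both supports. -/
theorem abs_sub_le_of_disjoint_support {f g : E → ℝ} (hf : LipschitzWith K f)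
    (hg : LipschitzWith K g) (hfg : Disjoint (Function.support f) (Function.support g))
    {x y : E} (hx : g x = 0) (hy : f y = 0) : |f x - g y| ≤ K * dist x y := by
  have hf' : ∀ a b, |f a - f b| ≤ K * dist a b := fun a b => by
    simpa only [Real.dist_eq] using hf.dist_le_mul a b
  have hg' : ∀ a b, |g a - g b| ≤ K * dist a b := fun a b => by
    simpa only [Real.dist_eq] using hg.dist_le_mul a b
  rcases eq_or_ne (f x) 0 with hfx | hfx
  · simpa only [hfx, ← hx] using hg' x y
  rcases eq_or_ne (g y) 0 with hgy | hgy
  · simpa only [hgy, ← hy] using hf' x y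
  refine (abs_sub _ _).trans (le_of_not_gt fun hlt => ?_)
  set rx := |f x|
  set ry := |g y|
  have hrx : 0 < rx := abs_pos.2 hfx
  have hry : 0 < ry := abs_pos.2 hgy
  set t := rx / (rx + ry)
  have ht0 : 0 < t := by positivity
  have ht1 : 0 < 1 - t := by rw [sub_pos, div_lt_one (by positivity)]; linarith
  set z := AffineMap.lineMap x y t
  have hxz : dist x z = t * dist x y := by
    rw [dist_left_lineMap, Real.norm_of_nonneg ht0.le]
  have hzy : dist z y = (1 - t) * dist x y := by
    rw [dist_lineMap_right, Real.norm_of_nonneg ht1.le]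
  have htr : t * (rx + ry) = rx := div_mul_cancel₀ _ (by positivity)
  by_cases hfz : f z = 0
  · have : rx ≤ t * (K * dist x y) := by
      simpa only [hfz, sub_zero, hxz, mul_left_comm] using hf' x z
    nlinarith [mul_lt_mul_of_pos_left hlt ht0]
  · have hgz : g z = 0 := Function.disjoint_support_iff.1 hfg hfz
    have : ry ≤ (1 - t) * (K * dist x y) := by
      simpa only [hgz, zero_sub, abs_neg, hzy, mul_left_comm] using hg' z y
    nlinarith [mul_lt_mul_of_pos_left hlt ht1]

theorem LipschitzWith.sum_of_pairwise_disjoint_support {ι : Type*} [Fintype ι]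
    {h : ι → E → ℝ} (hlip : ∀ i, LipschitzWith K (h i))
    (hdisj : Pairwise fun i i' => Disjoint (Function.support (h i)) (Function.support (h i'))) :
    LipschitzWith K fun x => ∑ i, h i x := by
  rcases isEmpty_or_nonempty ι with hι | hι
  · simpa only [Finset.univ_eq_empty, Finset.sum_empty] using LipschitzWith.const' (0 : ℝ)
  refine LipschitzWith.of_dist_le_mul fun x y => ?_
  obtain ⟨i, hi⟩ := exists_forall_ne_eq_zero_of_pairwise_disjoint_support hdisj x
  obtain ⟨i', hi'⟩ := exists_forall_ne_eq_zero_of_pairwise_disjoint_support hdisj y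
  rw [Finset.sum_eq_single_of_mem i (Finset.mem_univ _) fun b _ => hi b,
    Finset.sum_eq_single_of_mem i' (Finset.mem_univ _) fun b _ => hi' b, Real.dist_eq]
  rcases eq_or_ne i' i with rfl | hii
  · simpa only [Real.dist_eq] using (hlip i').dist_le_mul x y
  · exact abs_sub_le_of_disjoint_support (hlip i) (hlip i') (hdisj hii.symm) (hi i' hii)
      (hi' i hii.symm)

end DisjointSupports

theorem integral_withDensity_ofReal {α : Type*} [MeasurableSpace α] {μ : Measure α} {g : α → ℝ}
    (hg : Measurable g) (hg0 : ∀ x, 0 ≤ g x) (h : α → ℝ) :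
    ∫ x, h x ∂μ.withDensity (fun x => ENNReal.ofReal (g x)) = ∫ x, g x * h x ∂μ := by
  rw [integral_withDensity_eq_integral_toReal_smul hg.ennreal_ofReal
    (.of_forall fun _ => ENNReal.ofReal_lt_top)]
  simp only [ENNReal.toReal_ofReal (hg0 _), smul_eq_mul]

section DensityDifference

variable {α : Type*} [MeasurableSpace α] {μ : Measure α} {g g' Δ φ : α → ℝ}

theorem integrable_mul_iff_of_sub_eq (hΔ : ∀ x, g x - g' x = Δ x)
    (hΔφ : Integrable (fun x => Δ x * φ x) μ) :
    Integrable (fun x => g x * φ x) μ ↔ Integrable (fun x => g' x * φ x) μ := by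
  have hg : (fun x => g x * φ x) = (fun x => g' x * φ x) + fun x => Δ x * φ x :=
    funext fun x => by rw [Pi.add_apply, ← hΔ]; ring
  rw [hg, integrable_add_iff_integrable_left hΔφ]

theorem integral_mul_sub_integral_mul_of_sub_eq (hΔ : ∀ x, g x - g' x = Δ x)
    (hgφ : Integrable (fun x => g x * φ x) μ) (hΔφ : Integrable (fun x => Δ x * φ x) μ) :
    ∫ x, g x * φ x ∂μ - ∫ x, g' x * φ x ∂μ = ∫ x, Δ x * φ x ∂μ := by
  rw [← integral_sub hgφ ((integrable_mul_iff_of_sub_eq hΔ hΔφ).1 hgφ)]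
  simp only [← sub_mul, hΔ]

/- The mass condition `∫ Δ = 0` lets one replace `φ` by `φ - φ 0`, which is bounded by `‖x‖`. -/
theorem integral_mul_le_integral_abs_mul_norm {E : Type*} [NormedAddCommGroup E] [MeasurableSpace E]
    {μ : Measure E} {Δ φ : E → ℝ} (hΔ : Integrable Δ μ) (hΔ0 : ∫ x, Δ x ∂μ = 0)
    (hΔnorm : Integrable (fun x => |Δ x| * ‖x‖) μ) (hφ : LipschitzWith 1 φ)
    (hΔφ : Integrable (fun x => Δ x * φ x) μ) :
    ∫ x, Δ x * φ x ∂μ ≤ ∫ x, |Δ x| * ‖x‖ ∂μ := by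
  have hΔφ' : Integrable (fun x => Δ x * (φ x - φ 0)) μ := by
    simp only [mul_sub]
    exact hΔφ.sub (hΔ.mul_const _)
  have hshift : ∫ x, Δ x * φ x ∂μ = ∫ x, Δ x * (φ x - φ 0) ∂μ := by
    simp only [mul_sub]
    rw [integral_sub hΔφ (hΔ.mul_const _), integral_mul_const, hΔ0, zero_mul, sub_zero]
  rw [hshift]
  refine integral_mono hΔφ' hΔnorm fun x => ?_
  calc Δ x * (φ x - φ 0) ≤ |Δ x| * |φ x - φ 0| := (le_abs_self _).trans (abs_mul _ _).le
    _ ≤ |Δ x| * ‖x‖ := by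
      gcongr
      simpa only [NNReal.coe_one, one_mul, dist_zero_right, Real.dist_eq] using
        hφ.dist_le_mul x 0

end DensityDifference

theorem integral_mul_le_W1 {d : ℕ} {g g' Δ f : Euc d → ℝ} (hg : Measurable g)
    (hg' : Measurable g') (hg0 : ∀ x, 0 ≤ g x) (hg'0 : ∀ x, 0 ≤ g' x)
    (hΔ : ∀ x, g x - g' x = Δ x) (hΔc : Continuous Δ) (hΔs : HasCompactSupport Δ)
    (hΔ0 : ∫ x, Δ x = 0) (hf : LipschitzWith 1 f) (hgf : Integrable fun x => g x * f x) :
    ∫ x, Δ x * f x ≤ W1 (volume.withDensity fun x => ENNReal.ofReal (g x))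
      (volume.withDensity fun x => ENNReal.ofReal (g' x)) := by
  have hΔφ : ∀ φ : Euc d → ℝ, Continuous φ → Integrable fun x => Δ x * φ x :=
    fun φ hφ => (hΔc.mul hφ).integrable_of_hasCompactSupport hΔs.mul_right
  have hbdd : BddAbove (range fun φ : {f : Euc d → ℝ // LipschitzWith 1 f} =>
      ∫ x, φ.1 x ∂volume.withDensity (fun x => ENNReal.ofReal (g x)) -
        ∫ x, φ.1 x ∂volume.withDensity (fun x => ENNReal.ofReal (g' x))) := by
    refine ⟨∫ x, |Δ x| * ‖x‖, ?_⟩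
    rintro _ ⟨⟨φ, hφ⟩, rfl⟩
    simp only [integral_withDensity_ofReal hg hg0, integral_withDensity_ofReal hg' hg'0]
    by_cases hgφ : Integrable fun x => g x * φ x
    · rw [integral_mul_sub_integral_mul_of_sub_eq hΔ hgφ (hΔφ φ hφ.continuous)]
      exact integral_mul_le_integral_abs_mul_norm (hΔc.integrable_of_hasCompactSupport hΔs) hΔ0
        ((hΔc.abs.mul continuous_norm).integrable_of_hasCompactSupport hΔs.abs.mul_right) hφ
        (hΔφ φ hφ.continuous)
    · -- neither integral exists, so both take the junk value `0`
      rw [integral_undef hgφ,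
        integral_undef ((integrable_mul_iff_of_sub_eq hΔ (hΔφ φ hφ.continuous)).not.1 hgφ),
        sub_zero]
      exact integral_nonneg fun x => by positivity
  calc ∫ x, Δ x * f x
      = ∫ x, f x ∂volume.withDensity (fun x => ENNReal.ofReal (g x)) -
          ∫ x, f x ∂volume.withDensity (fun x => ENNReal.ofReal (g' x)) := by
        rw [integral_withDensity_ofReal hg hg0, integral_withDensity_ofReal hg' hg'0,
          integral_mul_sub_integral_mul_of_sub_eq hΔ hgf (hΔφ f hf.continuous)]
    _ ≤ W1 _ _ := le_ciSup hbdd ⟨f, hf⟩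

theorem integral_comp_smul_add {E F : Type*} [NormedAddCommGroup E] [NormedSpace ℝ E]
    [MeasurableSpace E] [BorelSpace E] [FiniteDimensional ℝ E] (μ : Measure E)
    [μ.IsAddHaarMeasure] [NormedAddCommGroup F] [NormedSpace ℝ F] (f : E → F) (R : ℝ) (v : E) :
    ∫ x, f (R • x + v) ∂μ = |(R ^ Module.finrank ℝ E)⁻¹| • ∫ x, f x ∂μ := by
  rw [Measure.integral_comp_smul μ (fun y => f (y + v)), integral_add_right_eq_self]

theorem hasCompactSupport_of_support_subset_cube {d : ℕ} {ψ : Euc d → ℝ}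
    (hψsupp : Function.support ψ ⊆ {x : Euc d | ∀ i, x i ∈ Ioo (-1 : ℝ) 1}) :
    HasCompactSupport ψ :=
  HasCompactSupport.of_support_subset_isCompact
    ((isCompact_univ_pi fun _ => isCompact_Icc (a := (-1 : ℝ)) (b := 1)).image
      (PiLp.continuous_toLp 2 _))
    fun x hx => ⟨x.ofLp, fun i _ => Ioo_subset_Icc_self (hψsupp hx i), rfl⟩

section DyadicCells

variable {d j : ℕ}

def cellShift (j : ℕ) (k : Fin d → Fin (2 ^ j)) : Euc d :=
  WithLp.toLp 2 fun i => 2 * ((k i : ℕ) : ℝ) - ((2 : ℝ) ^ j - 1)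

/-- Maps the `k`-th cell of the dyadic grid of mesh `2^{1-j}` on `(-1,1)^d` onto `(-1,1)^d`. -/
def cellMap (j : ℕ) (k : Fin d → Fin (2 ^ j)) : Euc d ≃ₜ Euc d :=
  (Homeomorph.smulOfNeZero ((2 : ℝ) ^ j) (by positivity)).trans
    (Homeomorph.addRight (cellShift j k))

theorem cellMap_apply (k : Fin d → Fin (2 ^ j)) (x : Euc d) :
    cellMap j k x = (2 : ℝ) ^ j • x + cellShift j k :=
  rfl

theorem dist_cellMap (k : Fin d → Fin (2 ^ j)) (x y : Euc d) :
    dist (cellMap j k x) (cellMap j k y) = 2 ^ j * dist x y := by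
  rw [cellMap_apply, cellMap_apply, dist_add_right, dist_smul₀,
    Real.norm_of_nonneg (by positivity)]

theorem integral_comp_cellMap (k : Fin d → Fin (2 ^ j)) (F : Euc d → ℝ) :
    ∫ x, F (cellMap j k x) = ((2 : ℝ) ^ (d * j))⁻¹ * ∫ x, F x := by
  simp only [cellMap_apply]
  rw [integral_comp_smul_add, finrank_euclideanSpace_fin, smul_eq_mul, ← pow_mul,
    mul_comm j d, abs_of_pos (by positivity)]

theorem disjoint_preimage_cellMap_cube {k k' : Fin d → Fin (2 ^ j)} (hkk : k ≠ k') :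
    Disjoint (cellMap j k ⁻¹' {x | ∀ i, x i ∈ Ioo (-1 : ℝ) 1})
      (cellMap j k' ⁻¹' {x | ∀ i, x i ∈ Ioo (-1 : ℝ) 1}) := by
  refine Set.disjoint_left.2 fun x hx hx' => hkk (funext fun i => ?_)
  have h := hx i
  have h' := hx' i
  simp only [cellMap_apply, cellShift, PiLp.add_apply, PiLp.smul_apply, smul_eq_mul,
    mem_Ioo] at h h'
  have hlt : (k i : ℕ) < k' i + 1 := by exact_mod_cast (by linarith : ((k i : ℕ) : ℝ) < k' i + 1)
  have hgt : (k' i : ℕ) < k i + 1 := by exact_mod_cast (by linarith : ((k' i : ℕ) : ℝ) < k i + 1)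
  exact Fin.ext (by omega)

end DyadicCells

section Bumps

variable {d j : ℕ} {ψ : Euc d → ℝ}

theorem psiK_eq_comp_cellMap (k : Fin d → Fin (2 ^ j)) :
    psiK d j ψ k = fun x => √((2 : ℝ) ^ (d * j)) * ψ (cellMap j k x) := by
  funext x
  unfold psiK
  congr 2
  ext i
  simp only [cellMap_apply, cellShift, PiLp.add_apply, PiLp.smul_apply, smul_eq_mul]
  ring

theorem continuous_psiK (hψ : Continuous ψ) (k : Fin d → Fin (2 ^ j)) :
    Continuous (psiK d j ψ k) := by
  rw [psiK_eq_comp_cellMap]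
  fun_prop

theorem hasCompactSupport_psiK
    (hψsupp : Function.support ψ ⊆ {x : Euc d | ∀ i, x i ∈ Ioo (-1 : ℝ) 1})
    (k : Fin d → Fin (2 ^ j)) : HasCompactSupport (psiK d j ψ k) := by
  rw [psiK_eq_comp_cellMap]
  exact ((hasCompactSupport_of_support_subset_cube hψsupp).comp_homeomorph (cellMap j k)).mul_left

theorem disjoint_support_psiK
    (hψsupp : Function.support ψ ⊆ {x : Euc d | ∀ i, x i ∈ Ioo (-1 : ℝ) 1})
    {k k' : Fin d → Fin (2 ^ j)} (hkk : k ≠ k') :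
    Disjoint (Function.support (psiK d j ψ k)) (Function.support (psiK d j ψ k')) := by
  refine (disjoint_preimage_cellMap_cube hkk).mono ?_ ?_ <;>
  · rw [psiK_eq_comp_cellMap]
    exact (Function.support_mul_subset_right _ _).trans fun x hx => hψsupp hx

theorem integrable_psiK (hψ : Continuous ψ)
    (hψsupp : Function.support ψ ⊆ {x : Euc d | ∀ i, x i ∈ Ioo (-1 : ℝ) 1})
    (k : Fin d → Fin (2 ^ j)) : Integrable (psiK d j ψ k) :=
  (continuous_psiK hψ k).integrable_of_hasCompactSupport (hasCompactSupport_psiK hψsupp k)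

theorem integral_psiK (hψint : ∫ x, ψ x = 0) (k : Fin d → Fin (2 ^ j)) :
    ∫ x, psiK d j ψ k x = 0 := by
  rw [psiK_eq_comp_cellMap, integral_const_mul, integral_comp_cellMap, hψint, mul_zero, mul_zero]

theorem integral_psiK_mul_psiK
    (hψsupp : Function.support ψ ⊆ {x : Euc d | ∀ i, x i ∈ Ioo (-1 : ℝ) 1})
    (hψsq : ∫ x, ψ x ^ 2 = 1) (k k' : Fin d → Fin (2 ^ j)) :
    ∫ x, psiK d j ψ k x * psiK d j ψ k' x = if k = k' then 1 else 0 := by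
  split_ifs with hkk
  · subst hkk
    have hsq : ∀ x, psiK d j ψ k x * psiK d j ψ k x = 2 ^ (d * j) * ψ (cellMap j k x) ^ 2 := by
      intro x
      rw [psiK_eq_comp_cellMap, mul_mul_mul_comm, Real.mul_self_sqrt (by positivity), sq]
    simp only [hsq]
    rw [integral_const_mul, integral_comp_cellMap k (fun y => ψ y ^ 2), hψsq, mul_one,
      mul_inv_cancel₀ (by positivity)]
  · have hzero : ∀ x, psiK d j ψ k x * psiK d j ψ k' x = 0 := fun x =>
      mul_eq_zero_of_ne_zero_imp_eq_zero fun hx =>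
        Function.disjoint_support_iff.1 (disjoint_support_psiK hψsupp hkk) hx
    simp only [hzero, integral_zero]

theorem lipschitzWith_const_mul_psiK {L : ℝ≥0} (hψ : LipschitzWith L ψ) {c : ℝ}
    (hc : |c| * (√((2 : ℝ) ^ (d * j)) * L * 2 ^ j) ≤ 1) (k : Fin d → Fin (2 ^ j)) :
    LipschitzWith 1 fun x => c * psiK d j ψ k x := by
  refine LipschitzWith.of_dist_le_mul fun x y => ?_
  have hψxy := hψ.dist_le_mul (cellMap j k x) (cellMap j k y)
  rw [dist_cellMap, Real.dist_eq] at hψxy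
  rw [psiK_eq_comp_cellMap, Real.dist_eq, ← mul_sub, ← mul_sub, abs_mul, abs_mul,
    abs_of_nonneg (Real.sqrt_nonneg _), NNReal.coe_one, one_mul]
  calc |c| * (√((2 : ℝ) ^ (d * j)) * |ψ (cellMap j k x) - ψ (cellMap j k y)|)
      ≤ |c| * (√((2 : ℝ) ^ (d * j)) * (L * (2 ^ j * dist x y))) := by gcongr
    _ = |c| * (√((2 : ℝ) ^ (d * j)) * L * 2 ^ j) * dist x y := by ring
    _ ≤ dist x y := mul_le_of_le_one_left dist_nonneg hc

end Bumps

def psiSum (d j : ℕ) (ψ : Euc d → ℝ) (α : (Fin d → Fin (2 ^ j)) → ℝ) (x : Euc d) : ℝ :=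
  ∑ k, α k * psiK d j ψ k x

section PsiSum

variable {d j : ℕ} {ψ : Euc d → ℝ}

theorem continuous_psiSum (hψ : Continuous ψ) (α : (Fin d → Fin (2 ^ j)) → ℝ) :
    Continuous (psiSum d j ψ α) :=
  continuous_finsetSum _ fun k _ => continuous_const.mul (continuous_psiK hψ k)

theorem hasCompactSupport_psiSum
    (hψsupp : Function.support ψ ⊆ {x : Euc d | ∀ i, x i ∈ Ioo (-1 : ℝ) 1})
    (α : (Fin d → Fin (2 ^ j)) → ℝ) : HasCompactSupport (psiSum d j ψ α) := by
  have hsum : psiSum d j ψ α = ∑ k, (fun _ => α k) * psiK d j ψ k := by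
    funext x
    simp only [psiSum, Finset.sum_apply, Pi.mul_apply]
  rw [hsum]
  exact HasCompactSupport.finset_sum fun k _ => (hasCompactSupport_psiK hψsupp k).mul_left

theorem integral_psiSum (hψ : Continuous ψ)
    (hψsupp : Function.support ψ ⊆ {x : Euc d | ∀ i, x i ∈ Ioo (-1 : ℝ) 1})
    (hψint : ∫ x, ψ x = 0) (α : (Fin d → Fin (2 ^ j)) → ℝ) :
    ∫ x, psiSum d j ψ α x = 0 := by
  unfold psiSum
  rw [integral_finsetSum _ fun k _ => (integrable_psiK hψ hψsupp k).const_mul _]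
  simp only [integral_const_mul, integral_psiK hψint, mul_zero, Finset.sum_const_zero]

theorem integral_psiSum_mul_psiSum (hψ : Continuous ψ)
    (hψsupp : Function.support ψ ⊆ {x : Euc d | ∀ i, x i ∈ Ioo (-1 : ℝ) 1})
    (hψsq : ∫ x, ψ x ^ 2 = 1) (α β : (Fin d → Fin (2 ^ j)) → ℝ) :
    ∫ x, psiSum d j ψ α x * psiSum d j ψ β x = ∑ k, α k * β k := by
  have hint : ∀ k k', Integrable fun x => α k * β k' * (psiK d j ψ k x * psiK d j ψ k' x) :=
    fun k k' => (Continuous.integrable_of_hasCompactSupport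
      ((continuous_psiK hψ k).mul (continuous_psiK hψ k'))
      (hasCompactSupport_psiK hψsupp k).mul_right).const_mul _
  have hexpand : ∀ x, psiSum d j ψ α x * psiSum d j ψ β x =
      ∑ k, ∑ k', α k * β k' * (psiK d j ψ k x * psiK d j ψ k' x) := fun x => by
    simp only [psiSum, Finset.sum_mul_sum]
    exact Finset.sum_congr rfl fun k _ => Finset.sum_congr rfl fun k' _ => by ring
  simp only [hexpand]
  rw [integral_finsetSum _ fun k _ => integrable_finsetSum _ fun k' _ => hint k k']
  simp only [integral_finsetSum _ fun k' _ => hint _ k', integral_const_mul,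
    integral_psiK_mul_psiK hψsupp hψsq, mul_ite, mul_one, mul_zero, Finset.sum_ite_eq,
    Finset.mem_univ, if_true]

theorem lipschitzWith_psiSum {L : ℝ≥0} (hψ : LipschitzWith L ψ)
    (hψsupp : Function.support ψ ⊆ {x : Euc d | ∀ i, x i ∈ Ioo (-1 : ℝ) 1})
    {α : (Fin d → Fin (2 ^ j)) → ℝ} (hα : ∀ k, |α k| * (√((2 : ℝ) ^ (d * j)) * L * 2 ^ j) ≤ 1) :
    LipschitzWith 1 (psiSum d j ψ α) :=
  LipschitzWith.sum_of_pairwise_disjoint_support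
    (fun k => lipschitzWith_const_mul_psiK hψ (hα k) k) fun _ _ hkk =>
      (disjoint_support_psiK hψsupp hkk).mono (Function.support_mul_subset_right _ _)
        (Function.support_mul_subset_right _ _)

end PsiSum

theorem continuous_stdGauss (d : ℕ) : Continuous (stdGauss d) := by
  unfold stdGauss
  fun_prop

theorem continuous_gPerturbed {d j : ℕ} {ψ : Euc d → ℝ} (hψ : Continuous ψ) (c₁ : ℝ)
    (ε : (Fin d → Fin (2 ^ j)) → ℝ) : Continuous (gPerturbed d j ψ c₁ ε) :=
  (continuous_stdGauss d).add (continuous_const.mul (continuous_psiSum hψ ε))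

theorem gPerturbed_sub_gPerturbed {d j : ℕ} (ψ : Euc d → ℝ) (c₁ : ℝ)
    (ε ε' : (Fin d → Fin (2 ^ j)) → ℝ) (x : Euc d) :
    gPerturbed d j ψ c₁ ε x - gPerturbed d j ψ c₁ ε' x =
      psiSum d j ψ (fun k => c₁ * (ε k - ε' k)) x := by
  simp only [gPerturbed, psiSum, Finset.mul_sum, add_sub_add_left_eq_sub,
    ← Finset.sum_sub_distrib]
  exact Finset.sum_congr rfl fun k _ => by ring

theorem abs_sub_le_two_of_eq_one_or_eq_neg_one {x y : ℝ} (hx : x = 1 ∨ x = -1)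
    (hy : y = 1 ∨ y = -1) : |x - y| ≤ 2 := by
  rcases hx with rfl | rfl <;> rcases hy with rfl | rfl <;> norm_num

theorem sum_sq_sub_eq_four_mul_card_ne {ι : Type*} [Fintype ι] {ε ε' : ι → ℝ}
    (hε : ∀ k, ε k = 1 ∨ ε k = -1) (hε' : ∀ k, ε' k = 1 ∨ ε' k = -1) :
    ∑ k, (ε k - ε' k) ^ 2 = 4 * ((Finset.univ.filter fun k => ε k ≠ ε' k).card : ℝ) := by
  rw [Finset.natCast_card_filter, Finset.mul_sum]
  refine Finset.sum_congr rfl fun k _ => ?_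
  rcases hε k with h | h <;> rcases hε' k with h' | h' <;> norm_num [h, h']

theorem two_rpow_neg_mul_half_add_one (d j : ℕ) :
    (2 : ℝ) ^ (-(j : ℝ) * ((d : ℝ) / 2 + 1)) = (√((2 : ℝ) ^ (d * j)) * 2 ^ j)⁻¹ := by
  rw [Real.sqrt_eq_rpow, ← Real.rpow_natCast, ← Real.rpow_natCast, ← Real.rpow_mul (by norm_num),
    ← Real.rpow_add (by norm_num), ← Real.rpow_neg (by norm_num)]
  push_cast
  ring_nf

theorem wasserstein_separation_perturbed_gaussians_general
    (d : ℕ) (j : ℕ)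
    (ψ : Euc d → ℝ)
    (M : ℝ) (hM : 0 < M) (hψlip : LipschitzWith (Real.toNNReal M) ψ)
    (hψsupp : Function.support ψ ⊆ {x : Euc d | ∀ i, x i ∈ Set.Ioo (-1 : ℝ) 1})
    (hψint : (∫ x, ψ x) = 0) (hψsq : (∫ x, (ψ x) ^ 2) = 1)
    (c₁ : ℝ)
    (ε ε' : (Fin d → Fin (2 ^ j)) → ℝ)
    (hε : ∀ k, ε k = 1 ∨ ε k = -1) (hε' : ∀ k, ε' k = 1 ∨ ε' k = -1)
    (hpos : ∀ x, 0 ≤ gPerturbed d j ψ c₁ ε x)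
    (hpos' : ∀ x, 0 ≤ gPerturbed d j ψ c₁ ε' x) :
    2 * c₁ * (2 : ℝ) ^ (-(j : ℝ) * ((d : ℝ) / 2 + 1)) * M⁻¹ *
        ((Finset.univ.filter fun k => ε k ≠ ε' k).card : ℝ)
      ≤ W1 (volume.withDensity fun x => ENNReal.ofReal (gPerturbed d j ψ c₁ ε x))
          (volume.withDensity fun x => ENNReal.ofReal (gPerturbed d j ψ c₁ ε' x)) := by
  have hψ : Continuous ψ := hψlip.continuous
  set L := √((2 : ℝ) ^ (d * j)) * M * 2 ^ j
  have hL : 0 < L := by positivity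
  set β : (Fin d → Fin (2 ^ j)) → ℝ := fun k => (ε k - ε' k) / (2 * L)
  have hβ : LipschitzWith 1 (psiSum d j ψ β) := by
    refine lipschitzWith_psiSum hψlip hψsupp fun k => ?_
    rw [Real.coe_toNNReal M hM.le, abs_div, abs_of_pos (by positivity : 0 < 2 * L),
      div_mul_eq_mul_div, div_le_one (by positivity)]
    exact mul_le_mul_of_nonneg_right (abs_sub_le_two_of_eq_one_or_eq_neg_one (hε k) (hε' k)) hL.le
  have hg := continuous_gPerturbed hψ c₁ ε
  have hW := integral_mul_le_W1 hg.measurable (continuous_gPerturbed hψ c₁ ε').measurable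
    hpos hpos' (gPerturbed_sub_gPerturbed ψ c₁ ε ε') (continuous_psiSum hψ _)
    (hasCompactSupport_psiSum hψsupp _) (integral_psiSum hψ hψsupp hψint _) hβ
    ((hg.mul (continuous_psiSum hψ β)).integrable_of_hasCompactSupport
      (hasCompactSupport_psiSum hψsupp β).mul_left)
  refine le_of_eq_of_le ?_ hW
  rw [integral_psiSum_mul_psiSum hψ hψsupp hψsq]
  have hsum : ∑ k, c₁ * (ε k - ε' k) * β k = c₁ / (2 * L) * ∑ k, (ε k - ε' k) ^ 2 := by
    rw [Finset.mul_sum]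
    exact Finset.sum_congr rfl fun k _ => by ring
  rw [hsum, sum_sq_sub_eq_four_mul_card_ne hε hε', two_rpow_neg_mul_half_add_one]
  field_simp
  ring

/-- **Wasserstein separation of perturbed Gaussian densities
(key step of Theorem 5).**
If `ψ` is a Lipschitz `C¹` bump supported in `(-1,1)^d` with `∫ψ = 0` and
`∫ψ² = 1`, `M ≥ Lip(ψ)`, and both perturbed densities `g_ε, g_{ε'}` are
nonnegative, then `W₁(g_ε, g_{ε'}) ≥ 2 c₁ 2^{-j(d/2+1)} M⁻¹ ω(ε, ε')`, where
`ω` is the Hamming distance. -/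
theorem wasserstein_separation_perturbed_gaussians
    (d : ℕ) (hd : 1 ≤ d) (j : ℕ) (hj : 0 < j)
    (ψ : Euc d → ℝ) (hψdiff : ContDiff ℝ 1 ψ)
    (M : ℝ) (hM : 0 < M) (hψlip : LipschitzWith (Real.toNNReal M) ψ)
    (hψsupp : Function.support ψ ⊆ {x : Euc d | ∀ i, x i ∈ Set.Ioo (-1 : ℝ) 1})
    (hψint : (∫ x, ψ x) = 0) (hψsq : (∫ x, (ψ x) ^ 2) = 1)
    (c₁ : ℝ) (hc₁ : 0 < c₁)
    (ε ε' : (Fin d → Fin (2 ^ j)) → ℝ)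
    (hε : ∀ k, ε k = 1 ∨ ε k = -1) (hε' : ∀ k, ε' k = 1 ∨ ε' k = -1)
    (hpos : ∀ x, 0 ≤ gPerturbed d j ψ c₁ ε x)
    (hpos' : ∀ x, 0 ≤ gPerturbed d j ψ c₁ ε' x) :
    2 * c₁ * (2 : ℝ) ^ (-(j : ℝ) * ((d : ℝ) / 2 + 1)) * M⁻¹ *
        ((Finset.univ.filter fun k => ε k ≠ ε' k).card : ℝ)
      ≤ W1 (volume.withDensity fun x => ENNReal.ofReal (gPerturbed d j ψ c₁ ε x))
          (volume.withDensity fun x => ENNReal.ofReal (gPerturbed d j ψ c₁ ε' x)) :=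
  wasserstein_separation_perturbed_gaussians_general d j ψ M hM hψlip hψsupp hψint hψsq c₁ ε ε' hε
    hε' hpos hpos'

end
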